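/- arXiv:2209.09242 — 2 statements merged into one kernel-verified Lean document; each statement's English description precedes it below -/
import Mathlib

section
/- The total number of alive prefixes over all positive lengths is at most k times the number of alive k-mers: ∑_{j=1}^{k} |{p ∈ A^j : p is alive}| ≤ k · |Z|. -/
/-! Extending an alive prefix `p ∈ A^j` by a column-maximising letter at every position `h ≥ j`
turns the lookahead bound `L_j` into actual factors, so the extension is an alive `k`-mer of
score `S(p) · L_j`. Extension is injective, so each length `j ≤ k` contributes at most `|Z|`. -/

open Finset

noncomputable def colMax {A : Type*} [Fintype A] [Nonempty A] (W : ℕ → A → ℝ) (h : ℕ) : ℝ :=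
  Finset.univ.sup' Finset.univ_nonempty (W h)

noncomputable def lookahead {A : Type*} [Fintype A] [Nonempty A]
    (k : ℕ) (W : ℕ → A → ℝ) (j : ℕ) : ℝ :=
  ∏ h ∈ Finset.Ico j k, colMax W h

noncomputable def prefScore {A : Type*} (W : ℕ → A → ℝ) {j : ℕ} (p : Fin j → A) : ℝ :=
  ∏ l : Fin j, W l (p l)

def PrefixAlive {A : Type*} [Fintype A] [Nonempty A]
    (k : ℕ) (W : ℕ → A → ℝ) (ε : ℝ) {j : ℕ} (p : Fin j → A) : Prop :=
  prefScore W p * lookahead k W j > ε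

noncomputable def score {A : Type*} (k : ℕ) (W : ℕ → A → ℝ) (w : Fin k → A) : ℝ :=
  ∏ j : Fin k, W j (w j)

section

variable {A : Type*} [Fintype A] [Nonempty A]

noncomputable def colArgmax (W : ℕ → A → ℝ) (h : ℕ) : A :=
  (exists_mem_eq_sup' univ_nonempty (W h)).choose

lemma apply_colArgmax (W : ℕ → A → ℝ) (h : ℕ) : W h (colArgmax W h) = colMax W h :=
  (exists_mem_eq_sup' univ_nonempty (W h)).choose_spec.2.symm

noncomputable def extendByArgmax (W : ℕ → A → ℝ) {j : ℕ} (k : ℕ) (p : Fin j → A) :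
    Fin k → A :=
  fun i => if h : (i : ℕ) < j then p ⟨i, h⟩ else colArgmax W i

lemma extendByArgmax_injective (W : ℕ → A → ℝ) {j k : ℕ} (hjk : j ≤ k) :
    Function.Injective (extendByArgmax W (j := j) k) := by
  intro p q hpq
  funext l
  simpa [extendByArgmax] using congrFun hpq ⟨l, l.isLt.trans_le hjk⟩

lemma score_extendByArgmax (W : ℕ → A → ℝ) {j k : ℕ} (hjk : j ≤ k) (p : Fin j → A) :
    score k W (extendByArgmax W k p) = prefScore W p * lookahead k W j := by
  have hscore : score k W (extendByArgmax W k p) =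
      ∏ i ∈ range k, if h : i < j then W i (p ⟨i, h⟩) else colMax W i := by
    rw [score, ← Fin.prod_univ_eq_prod_range]
    refine prod_congr rfl fun i _ => ?_
    by_cases h : (i : ℕ) < j <;> simp [extendByArgmax, h, apply_colArgmax]
  rw [hscore, ← prod_range_mul_prod_Ico _ hjk, prefScore, lookahead,
    ← Fin.prod_univ_eq_prod_range (fun i => if h : i < j then W i (p ⟨i, h⟩) else _)]
  congr 1
  · exact prod_congr rfl fun i _ => by simp [i.isLt]
  · exact prod_congr rfl fun i hi => by simp [not_lt.mpr (mem_Ico.mp hi).1]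

lemma ncard_prefixAlive_le_ncard_alive (k : ℕ) (W : ℕ → A → ℝ) (ε : ℝ) {j : ℕ} (hjk : j ≤ k) :
    Set.ncard {p : Fin j → A | PrefixAlive k W ε p} ≤
      Set.ncard {w : Fin k → A | score k W w > ε} :=
  Set.ncard_le_ncard_of_injOn (extendByArgmax W k)
    (fun p hp => by simpa [score_extendByArgmax W hjk, PrefixAlive] using hp)
    (extendByArgmax_injective W hjk).injOn

end

theorem total_alive_prefixes_le_k_mul_Z_general
    {A : Type*} [Fintype A] [Nonempty A]
    (k : ℕ) (W : ℕ → A → ℝ)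
    (ε : ℝ) :
    ∑ j ∈ Finset.Icc 1 k, Set.ncard {p : Fin j → A | PrefixAlive k W ε p} ≤
      k * Set.ncard {w : Fin k → A | score k W w > ε} := by
  calc ∑ j ∈ Icc 1 k, Set.ncard {p : Fin j → A | PrefixAlive k W ε p}
      ≤ #(Icc 1 k) • Set.ncard {w : Fin k → A | score k W w > ε} :=
        sum_le_card_nsmul _ _ _ fun j hj =>
          ncard_prefixAlive_le_ncard_alive k W ε (mem_Icc.mp hj).2
    _ = k * Set.ncard {w : Fin k → A | score k W w > ε} := by simp

/-- The total number of alive prefixes over all positive lengths is at most `k · |Z|`. -/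
theorem total_alive_prefixes_le_k_mul_Z
    {A : Type*} [Fintype A] [Nonempty A]
    (k : ℕ) (hk : 1 ≤ k) (W : ℕ → A → ℝ) (hW : ∀ j a, 0 ≤ W j a)
    (ε : ℝ) (hε : 0 ≤ ε) :
    ∑ j ∈ Finset.Icc 1 k, Set.ncard {p : Fin j → A | PrefixAlive k W ε p} ≤
      k * Set.ncard {w : Fin k → A | score k W w > ε} :=
  total_alive_prefixes_le_k_mul_Z_general k W ε
end

section
/- (Upper bound of the prefix–suffix decomposition lemma.) For every m with 0 ≤ m ≤ k, the number of alive k-mers is at most the product of the number of alive prefixes and the number of alive suffixes: |Z| ≤ |L| · |R|. -/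
open Finset

/-!
A `k`-mer is the concatenation of its prefix of length `m` and its suffix of length `k - m`, and
its score is the product of their scores. Bounding either factor by the product of column maxima
can only increase the score, so the prefix and the suffix of an alive `k`-mer are alive; hence
`Z` embeds into `L × R`.
-/

section

variable {A : Type*}

lemma score_append (m n : ℕ) (W : ℕ → A → ℝ) (l : Fin m → A) (r : Fin n → A) :
    score (m + n) W (Fin.append l r) = score m W l * score n (fun j => W (m + j)) r := by
  simp [score, Fin.prod_univ_add]

lemma score_nonneg {W : ℕ → A → ℝ} (hW : ∀ j a, 0 ≤ W j a) (k : ℕ) (w : Fin k → A) :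
    0 ≤ score k W w :=
  prod_nonneg fun j _ => hW j (w j)

variable [Fintype A] [Nonempty A]

lemma le_colMax (W : ℕ → A → ℝ) (h : ℕ) (a : A) : W h a ≤ colMax W h :=
  le_sup' (W h) (mem_univ a)

lemma score_le_prod_colMax {W : ℕ → A → ℝ} (hW : ∀ j a, 0 ≤ W j a) (k : ℕ) (w : Fin k → A) :
    score k W w ≤ ∏ h ∈ range k, colMax W h := by
  rw [← Fin.prod_univ_eq_prod_range]
  exact prod_le_prod (fun j _ => hW j (w j)) fun j _ => le_colMax W j (w j)

lemma score_shift_le_prod_Ico_colMax {W : ℕ → A → ℝ} (hW : ∀ j a, 0 ≤ W j a) (m n : ℕ)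
    (r : Fin n → A) :
    score n (fun j => W (m + j)) r ≤ ∏ h ∈ Ico m (m + n), colMax W h := by
  rw [prod_Ico_eq_prod_range, Nat.add_sub_cancel_left]
  exact score_le_prod_colMax (fun j => hW (m + j)) n r

lemma ncard_alive_le_mul {W : ℕ → A → ℝ} (hW : ∀ j a, 0 ≤ W j a) (ε : ℝ) (m n : ℕ) :
    {w : Fin (m + n) → A | score (m + n) W w > ε}.ncard ≤
      {l : Fin m → A | score m W l * ∏ h ∈ Ico m (m + n), colMax W h > ε}.ncard *
      {r : Fin n → A | (∏ h ∈ range m, colMax W h) * score n (fun j => W (m + j)) r > ε}.ncard := by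
  set L := {l : Fin m → A | score m W l * ∏ h ∈ Ico m (m + n), colMax W h > ε}
  set R := {r : Fin n → A | (∏ h ∈ range m, colMax W h) * score n (fun j => W (m + j)) r > ε}
  have h_sub : {w : Fin (m + n) → A | score (m + n) W w > ε} ⊆
      (fun p : (Fin m → A) × (Fin n → A) => Fin.append p.1 p.2) '' L ×ˢ R := by
    intro w hw
    set l : Fin m → A := fun i => w (Fin.castAdd n i)
    set r : Fin n → A := fun i => w (Fin.natAdd m i)
    have hlr : Fin.append l r = w := Fin.append_castAdd_natAdd
    have hε : ε < score m W l * score n (fun j => W (m + j)) r := by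
      rw [← score_append, hlr]
      exact hw
    refine ⟨(l, r), ⟨?_, ?_⟩, hlr⟩
    · exact hε.trans_le <| mul_le_mul_of_nonneg_left
        (score_shift_le_prod_Ico_colMax hW m n r) (score_nonneg hW m l)
    · exact hε.trans_le <| mul_le_mul_of_nonneg_right
        (score_le_prod_colMax hW m l) (score_nonneg (fun j => hW (m + j)) n r)
  calc _ ≤ (_ '' L ×ˢ R).ncard := Set.ncard_le_ncard h_sub
    _ ≤ (L ×ˢ R).ncard := Set.ncard_image_le
    _ = L.ncard * R.ncard := Set.ncard_prod

end

theorem Z_card_le_L_mul_R_general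
    {A : Type*} [Fintype A] [Nonempty A]
    (k : ℕ) (W : ℕ → A → ℝ) (hW : ∀ j a, 0 ≤ W j a)
    (ε : ℝ) (m : ℕ) (hm : m ≤ k) :
    Set.ncard {w : Fin k → A | score k W w > ε} ≤
      Set.ncard {l : Fin m → A |
          (∏ j : Fin m, W j (l j)) * (∏ h ∈ Finset.Ico m k, colMax W h) > ε} *
      Set.ncard {r : Fin (k - m) → A |
          (∏ h ∈ Finset.range m, colMax W h) * (∏ j : Fin (k - m), W (m + j) (r j)) > ε} := by
  obtain ⟨n, rfl⟩ := Nat.exists_eq_add_of_le hm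
  rw [Nat.add_sub_cancel_left]
  exact ncard_alive_le_mul hW ε m n

/-- Upper bound of the prefix–suffix decomposition lemma: `|Z| ≤ |L| · |R|`. -/
theorem Z_card_le_L_mul_R
    {A : Type*} [Fintype A] [Nonempty A]
    (k : ℕ) (hk : 1 ≤ k) (W : ℕ → A → ℝ) (hW : ∀ j a, 0 ≤ W j a)
    (ε : ℝ) (hε : 0 ≤ ε) (m : ℕ) (hm : m ≤ k) :
    Set.ncard {w : Fin k → A | score k W w > ε} ≤
      Set.ncard {l : Fin m → A |
          (∏ j : Fin m, W j (l j)) * (∏ h ∈ Finset.Ico m k, colMax W h) > ε} *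
      Set.ncard {r : Fin (k - m) → A |
          (∏ h ∈ Finset.range m, colMax W h) * (∏ j : Fin (k - m), W (m + j) (r j)) > ε} :=
  Z_card_le_L_mul_R_general k W hW ε m hm
end
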